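/- For k ≥ 0, one has the polynomial identity (q(1−(1−q)z); q)_k = (q;q)_k · [k,z choose k]_q in ℚ(q)[z]. -/
import Mathlib


open Finset Polynomial

noncomputable def q : RatFunc ℚ := RatFunc.X

/-- q-integer `[k]_q = (1-q^k)/(1-q)` for `k : ℤ`. -/
noncomputable def qint (k : ℤ) : RatFunc ℚ := (1 - q ^ k) / (1 - q)

/-- q-factorial `[n]_q!`. -/
noncomputable def qfact (n : ℕ) : RatFunc ℚ := ∏ m ∈ Finset.range n, qint (m + 1)

/-- q-Pochhammer `(A;Q)_n`. -/
noncomputable def qPoch (Q A : RatFunc ℚ) (n : ℕ) : RatFunc ℚ :=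
  ∏ j ∈ Finset.range n, (1 - A * Q ^ j)

/-- The generalized q-binomial polynomial `[m, z choose n]_q`. -/
noncomputable def qbinomPoly (m n : ℕ) : Polynomial (RatFunc ℚ) :=
  Polynomial.C (qfact n)⁻¹ *
    ∏ k ∈ Finset.Icc ((m : ℤ) - n + 1) (m : ℤ),
      (Polynomial.C (qint k) + Polynomial.C (q ^ k) * Polynomial.X)
/-- The polynomial `(q(1-(1-q)z); q)_k` in the variable `z`. -/
noncomputable def pochPoly (k : ℕ) : Polynomial (RatFunc ℚ) :=
  ∏ j ∈ Finset.range k,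
    (1 - Polynomial.C q * (1 - Polynomial.C (1 - q) * Polynomial.X) * Polynomial.C q ^ j)


lemma one_sub_q_pow_ne (n : ℕ) : (1 : RatFunc ℚ) - q ^ (n+1) ≠ 0 := by
  rw [sub_ne_zero]
  intro h
  have h2 : (algebraMap (Polynomial ℚ) (RatFunc ℚ)) 1 = algebraMap (Polynomial ℚ) (RatFunc ℚ) (Polynomial.X ^ (n+1)) := by
    simpa [q, ← RatFunc.algebraMap_X, ← map_pow] using h
  have h3 := RatFunc.algebraMap_injective ℚ h2
  have := congrArg Polynomial.natDegree h3
  simp at this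
lemma one_sub_q_ne : (1 : RatFunc ℚ) - q ≠ 0 := by
  simpa using one_sub_q_pow_ne 0
lemma qint_succ (n : ℕ) : qint ((n:ℤ)+1) = (1 - q^(n+1))/(1-q) := by
  rw [qint]; norm_cast
lemma qint_ne (n : ℕ) : qint ((n:ℤ)+1) ≠ 0 := by
  rw [qint_succ]
  exact div_ne_zero (one_sub_q_pow_ne n) one_sub_q_ne
lemma one_sub_q_mul_qint (n : ℕ) : (1-q) * qint ((n:ℤ)+1) = 1 - q^(n+1) := by
  rw [qint_succ, mul_div_cancel₀ _ one_sub_q_ne]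
lemma factor_eq (j : ℕ) :
    (1 : Polynomial (RatFunc ℚ)) - C q * (1 - C (1-q) * X) * C q ^ j
      = C (1-q) * (C (qint ((j:ℤ)+1)) + C (q ^ ((j:ℤ)+1)) * X) := by
  have h1 : (1-q) * qint ((j:ℤ)+1) = 1 - q^(j+1) := one_sub_q_mul_qint j
  have h2 : (q : RatFunc ℚ) ^ ((j:ℤ)+1) = q ^ (j+1) := by norm_cast
  rw [h2, mul_add, ← C_mul, h1, ← mul_assoc, ← C_mul]
  rw [mul_sub, mul_one, sub_mul, ← C_pow, ← C_mul]
  ring_nf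
  rw [mul_right_comm]
  simp only [← C_mul]
  have e1 : q*(1-q)*(q^j) = q*q^j - q^2*q^j := by ring
  rw [e1, map_sub, map_sub, map_one]
  ring
lemma prod_Icc_top (k : ℕ) (f : ℤ → Polynomial (RatFunc ℚ)) :
    ∏ i ∈ Finset.Icc (1:ℤ) ((k:ℤ)+1), f i = (∏ i ∈ Finset.Icc (1:ℤ) (k:ℤ), f i) * f ((k:ℤ)+1) := by
  have h : Finset.Icc (1:ℤ) ((k:ℤ)+1) = insert ((k:ℤ)+1) (Finset.Icc 1 (k:ℤ)) := by
    ext x; simp; omega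
  rw [h, Finset.prod_insert (by simp), mul_comm]
lemma qfact_ne (n : ℕ) : qfact n ≠ 0 := by
  rw [qfact]
  exact Finset.prod_ne_zero_iff.mpr fun m _ => qint_ne m
lemma qbinom_succ (k : ℕ) :
    C (qint ((k:ℤ)+1)) * qbinomPoly (k+1) (k+1)
      = qbinomPoly k k * (C (qint ((k:ℤ)+1)) + C (q ^ ((k:ℤ)+1)) * X) := by
  have hfact : qfact (k+1) = qfact k * qint ((k:ℤ)+1) := Finset.prod_range_succ _ _
  rw [qbinomPoly, qbinomPoly, hfact]
  have hb1 : (((k+1:ℕ)):ℤ) - ((k+1:ℕ):ℤ) + 1 = 1 := by push_cast; ring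
  have hb2 : ((k:ℤ) - (k:ℕ) + 1) = 1 := by push_cast; ring
  have hb3 : (((k+1:ℕ)):ℤ) = (k:ℤ)+1 := by push_cast; ring
  rw [hb1, hb2, hb3, prod_Icc_top]
  rw [mul_inv, C_mul]
  have hcancel : C (qint ((k:ℤ)+1)) * C ((qint ((k:ℤ)+1))⁻¹) = 1 := by
    rw [← C_mul, mul_inv_cancel₀ (qint_ne k), C_1]
  set P := ∏ i ∈ Finset.Icc (1:ℤ) (k:ℤ), (C (qint i) + C (q ^ i) * X)
  linear_combination (C (qfact k)⁻¹ * (P * (C (qint ((k:ℤ)+1)) + C (q ^ ((k:ℤ)+1)) * X))) * hcancel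

theorem pochPoly_eq_qbinomPoly (k : ℕ) :
    pochPoly k = Polynomial.C (qPoch q q k) * qbinomPoly k k := by
  induction k with
  | zero => simp [pochPoly, qPoch, qbinomPoly, qfact]
  | succ k ih =>
    have hp : pochPoly (k+1) = pochPoly k * (1 - C q * (1 - C (1-q) * X) * C q ^ k) :=
      Finset.prod_range_succ _ _
    have hq : qPoch q q (k+1) = qPoch q q k * (1 - q * q ^ k) :=
      Finset.prod_range_succ _ _
    rw [hp, ih, hq]
    rw [factor_eq k]
    have key := qbinom_succ k
    calc C (qPoch q q k) * qbinomPoly k k * (C (1-q) * (C (qint ((k:ℤ)+1)) + C (q ^ ((k:ℤ)+1)) * X))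
        = C (qPoch q q k) * C (1-q) * (qbinomPoly k k * (C (qint ((k:ℤ)+1)) + C (q ^ ((k:ℤ)+1)) * X)) := by ring
      _ = C (qPoch q q k) * C (1-q) * (C (qint ((k:ℤ)+1)) * qbinomPoly (k+1) (k+1)) := by rw [key]
      _ = C (qPoch q q k * ((1-q) * qint ((k:ℤ)+1))) * qbinomPoly (k+1) (k+1) := by
          rw [C_mul, C_mul]; ring
      _ = C (qPoch q q k * (1 - q * q ^ k)) * qbinomPoly (k+1) (k+1) := by
          rw [one_sub_q_mul_qint, pow_succ, mul_comm (q^k) q]
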